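/- Let 𝕂 be a field, r ≥ 1, and let H be a finite-dimensional 𝕂-linear subspace of the polynomial ring 𝕂[x₁,…,x_r]. Let G = (V,E) be a finite simple graph that admits a representation over H, i.e., assignments v ↦ f_v ∈ H and v ↦ c_v ∈ 𝕂^r such that f_v(c_v) ≠ 0 for every v ∈ V, and f_u(c_v) = 0 for every pair of distinct non-adjacent vertices u, v ∈ V. Then for every k ≥ 1, α(G^k) ≤ (dim_𝕂 H)^k. -/

import Mathlib

/-- The `k`-th strong power of a simple graph: vertices are `k`-tuples, and two distinct
tuples are adjacent iff in each coordinate the entries are equal or adjacent. -/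
def gStrongPow {α : Type*} (G : SimpleGraph α) (k : ℕ) :
    SimpleGraph (Fin k → α) where
  Adj u v := u ≠ v ∧ ∀ i, u i = v i ∨ G.Adj (u i) (v i)
  symm := by
    constructor
    rintro u v ⟨hne, h⟩
    exact ⟨hne.symm, fun i => (h i).imp Eq.symm (fun h' => G.adj_symm h')⟩
  loopless := by
    constructor
    intro u h
    exact h.1 rfl
/-- The independence number of a graph on a finite vertex type: the maximum size of a
set of pairwise non-adjacent vertices. -/
noncomputable def gIndepNum {α : Type*} [Fintype α] (G : SimpleGraph α) : ℕ :=
  sSup {n | ∃ s : Finset α, s.card = n ∧ (s : Set α).Pairwise (fun a b => ¬ G.Adj a b)}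


/-!
Given an independent set `S` of `G^k`, the functions `y ↦ ∏ i, f_{u i} (y i)` on `(𝕂^r)^k`,
for `u ∈ S`, have a diagonal evaluation matrix at the points `i ↦ c_{u i}`: two distinct
tuples of `S` differ at some coordinate in a pair of distinct non-adjacent vertices, where the
factor vanishes. Hence they are linearly independent. They all lie in the span of the `(dim H)^k`
products of basis elements of `H`, so `|S| ≤ (dim H)^k`.
-/

open Finset MvPolynomial Submodule

theorem linearIndependent_of_apply_eq_zero_of_ne {R X ι : Type*} [CommRing R]
    [NoZeroDivisors R] (g : ι → X → R) (p : ι → X) (hdiag : ∀ i, g i (p i) ≠ 0)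
    (hoff : ∀ i j, i ≠ j → g i (p j) = 0) :
    LinearIndependent R g := by
  rw [linearIndependent_iff']
  intro t a hsum i hi
  have hpi := congrFun hsum (p i)
  simp only [Finset.sum_apply, Pi.smul_apply, smul_eq_mul, Pi.zero_apply] at hpi
  rw [Finset.sum_eq_single i (fun j _ hj => by rw [hoff j i hj, mul_zero])
    (fun h => absurd hi h)] at hpi
  exact (mul_eq_zero.mp hpi).resolve_right (hdiag i)

theorem LinearIndependent.card_le_card_of_forall_mem_span {K M ι κ : Type*} [Field K]
    [AddCommGroup M] [Module K M] [Fintype ι] [Fintype κ] {v : ι → M} {w : κ → M}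
    (hv : LinearIndependent K v) (hvw : ∀ i, v i ∈ span K (Set.range w)) :
    Fintype.card ι ≤ Fintype.card κ :=
  have := FiniteDimensional.span_of_finite K (Set.finite_range w)
  calc Fintype.card ι = Module.finrank K (span K (Set.range v)) := (finrank_span_eq_card hv).symm
    _ ≤ Module.finrank K (span K (Set.range w)) :=
      finrank_mono (span_le.mpr (Set.range_subset_iff.mpr hvw))
    _ ≤ Fintype.card κ := finrank_range_le_card w

theorem prod_apply_mem_span_range_prod {R X ι κ : Type*} [CommSemiring R] [Fintype ι]
    [Fintype κ] {e : ι → X → R} {g : κ → X → R} (hg : ∀ i, g i ∈ span R (Set.range e)) :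
    (fun y : κ → X => ∏ i, g i (y i)) ∈
      span R (Set.range fun (p : κ → ι) (y : κ → X) => ∏ i, e (p i) (y i)) := by
  classical
  choose a ha using fun i => (mem_span_range_iff_exists_fun R).mp (hg i)
  refine (mem_span_range_iff_exists_fun R).mpr ⟨fun p => ∏ i, a i (p i), funext fun y => ?_⟩
  simp only [← ha, Finset.sum_apply, Pi.smul_apply, smul_eq_mul, Fintype.prod_sum,
    Finset.prod_mul_distrib]

theorem eval_mem_span_range_eval_basis {R σ ι : Type*} [CommSemiring R] [Fintype ι]
    {H : Submodule R (MvPolynomial σ R)} (b : Module.Basis ι R H) {p : MvPolynomial σ R}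
    (hp : p ∈ H) :
    (fun y => eval y p) ∈ span R (Set.range fun j y => eval y (b j : MvPolynomial σ R)) := by
  have hp_repr : p = ∑ j, b.repr ⟨p, hp⟩ j • (b j : MvPolynomial σ R) := by
    simpa only [Submodule.coe_sum, Submodule.coe_smul] using
      congrArg Subtype.val (b.sum_repr ⟨p, hp⟩).symm
  refine (mem_span_range_iff_exists_fun R).mpr ⟨b.repr ⟨p, hp⟩, funext fun y => ?_⟩
  conv_rhs => rw [hp_repr]
  simp

theorem exists_ne_not_adj_of_not_adj_gStrongPow {α : Type*} {G : SimpleGraph α} {k : ℕ}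
    {u v : Fin k → α} (huv : u ≠ v) (hadj : ¬ (gStrongPow G k).Adj u v) :
    ∃ i, u i ≠ v i ∧ ¬ G.Adj (u i) (v i) := by
  by_contra! h
  exact hadj ⟨huv, fun i => or_iff_not_imp_left.mpr (h i)⟩

theorem gIndepNum_le_of_forall_card_le {α : Type*} [Fintype α] {G : SimpleGraph α} {n : ℕ}
    (h : ∀ s : Finset α, (s : Set α).Pairwise (fun a b => ¬ G.Adj a b) → #s ≤ n) :
    gIndepNum G ≤ n :=
  csSup_le ⟨0, ∅, by simp, by simp⟩ fun _ ⟨s, hs, hpair⟩ => hs ▸ h s hpair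

theorem indepNum_strongPow_le_finrank_pow_of_representation_general
    {𝕂 : Type*} [Field 𝕂] (r : ℕ)
    (H : Submodule 𝕂 (MvPolynomial (Fin r) 𝕂)) [FiniteDimensional 𝕂 H]
    {V : Type*} [Fintype V] (G : SimpleGraph V)
    (f : V → MvPolynomial (Fin r) 𝕂) (c : V → Fin r → 𝕂)
    (hfH : ∀ v, f v ∈ H)
    (hdiag : ∀ v, MvPolynomial.eval (c v) (f v) ≠ 0)
    (hoff : ∀ u v, u ≠ v → ¬ G.Adj u v → MvPolynomial.eval (c v) (f u) = 0) :
    ∀ k, 1 ≤ k → gIndepNum (gStrongPow G k) ≤ (Module.finrank 𝕂 H) ^ k := by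
  intro k _
  refine gIndepNum_le_of_forall_card_le fun s hs => ?_
  let b := Module.finBasis 𝕂 H
  let F : s → (Fin k → Fin r → 𝕂) → 𝕂 := fun u y => ∏ i, eval (y i) (f (u.1 i))
  have hF_indep : LinearIndependent 𝕂 F := by
    refine linearIndependent_of_apply_eq_zero_of_ne F (fun u i => c (u.1 i))
      (fun u => prod_ne_zero_iff.mpr fun i _ => hdiag _) fun u v huv => ?_
    have huv' : u.1 ≠ v.1 := Subtype.coe_ne_coe.mpr huv
    obtain ⟨i, hne, hnadj⟩ := exists_ne_not_adj_of_not_adj_gStrongPow huv' (hs u.2 v.2 huv')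
    exact prod_eq_zero (mem_univ i) (hoff _ _ hne hnadj)
  have hF_span (u : s) := prod_apply_mem_span_range_prod fun i =>
    eval_mem_span_range_eval_basis b (hfH (u.1 i))
  calc #s = Fintype.card s := (Fintype.card_coe s).symm
    _ ≤ Fintype.card (Fin k → Fin (Module.finrank 𝕂 H)) :=
      hF_indep.card_le_card_of_forall_mem_span hF_span
    _ = Module.finrank 𝕂 H ^ k := by simp

/-- If a finite simple graph `G` has a representation over a finite-dimensional space
`H` of polynomials in `r` variables over a field `𝕂`, then `α(G^k) ≤ (dim H)^k`
for every `k ≥ 1`. -/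
theorem indepNum_strongPow_le_finrank_pow_of_representation
    {𝕂 : Type*} [Field 𝕂] (r : ℕ) (hr : 1 ≤ r)
    (H : Submodule 𝕂 (MvPolynomial (Fin r) 𝕂)) [FiniteDimensional 𝕂 H]
    {V : Type*} [Fintype V] (G : SimpleGraph V)
    (f : V → MvPolynomial (Fin r) 𝕂) (c : V → Fin r → 𝕂)
    (hfH : ∀ v, f v ∈ H)
    (hdiag : ∀ v, MvPolynomial.eval (c v) (f v) ≠ 0)
    (hoff : ∀ u v, u ≠ v → ¬ G.Adj u v → MvPolynomial.eval (c v) (f u) = 0) :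
    ∀ k, 1 ≤ k → gIndepNum (gStrongPow G k) ≤ (Module.finrank 𝕂 H) ^ k :=
  indepNum_strongPow_le_finrank_pow_of_representation_general r H G f c hfH hdiag hoff
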